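/- Second part of the Corollary to Theorem 2: if the neighborhood treatment is randomized in both populations, i.e. P(G=g|S=s,𝓗) = P(G=g|S=s) a.s. for s ∈ {1,2} and all g ∈ {0,…,g_max}, then φ₁ − φ₂ = Σ_{g=0}^{g_max} E[τ(g)] · ( P(G=g|S=1) − P(G=g|S=2) ). -/

import Mathlib

open MeasureTheory ProbabilityTheory Set

/-- The indicator function of a set, as a real-valued random variable. -/
noncomputable def ind {Ω : Type*} (s : Set Ω) : Ω → ℝ := s.indicator fun _ => 1

/-- The covariance of two real random variables, `Cov(f,g) = E[f·g] − E[f]·E[g]`. -/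
noncomputable def cov {Ω : Type*} {m : MeasurableSpace Ω} (μ : MeasureTheory.Measure Ω)
    (f g : Ω → ℝ) : ℝ :=
  (∫ ω, f ω * g ω ∂μ) - (∫ ω, f ω ∂μ) * ∫ ω, g ω ∂μ

/-! Fix a population `s` and a neighborhood level `g`. Randomization says that under `P(·|S=s)`
the event `{G = g}` is independent of `𝓗`; since `S` is independent of `𝓗` as well, the atom
`{S = s, G = g}` is independent of `𝓗` under `P`. Conditional independence of `Y^(a,g)` and
`(S,G)` given `𝓗` then upgrades to plain independence of `Y^(a,g)` and that atom, whence
`E[1{G=g} Y^(a,g) | S=s] = P(G=g|S=s) E[Y^(a,g)]`. Summing over `g` gives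
`φ_s = Σ_g E[τ(g)] P(G=g|S=s)`, and the claim is the difference of the two populations. -/

open MeasurableSpace

section

variable {Ω α β γ δ : Type*} {m mΩ : MeasurableSpace Ω} {μ : Measure Ω}
  {s t : Set Ω}

lemma ind_mul_apply (t : Set Ω) (f : Ω → ℝ) (ω : Ω) : ind t ω * f ω = t.indicator f ω := by
  by_cases h : ω ∈ t <;> simp [ind, h]

lemma MeasureTheory.Integrable.cond {f : Ω → ℝ} (hf : Integrable f μ) (hs : μ s ≠ 0) :
    Integrable f μ[|s] :=
  hf.restrict.smul_measure (ENNReal.inv_ne_top.2 hs)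

lemma indep_generateFrom_singleton_of_measure_inter [IsProbabilityMeasure μ] (hm : m ≤ mΩ)
    (ht : MeasurableSet t) (h : ∀ u, MeasurableSet[m] u → μ (t ∩ u) = μ t * μ u) :
    Indep (generateFrom {t}) m μ := by
  refine IndepSets.indep (generateFrom_le (by simpa using ht)) hm (IsPiSystem.singleton t)
    (@isPiSystem_measurableSet Ω m) rfl (@generateFrom_measurableSet Ω m).symm ?_
  rw [IndepSets_iff]
  rintro _ u rfl hu
  exact h u hu

lemma measure_inter_eq_mul_of_condExp_ae_eq_const [IsProbabilityMeasure μ] (hm : m ≤ mΩ)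
    (ht : MeasurableSet t) {c : ℝ} (hc : μ⟦t | m⟧ =ᵐ[μ] fun _ => c) {u : Set Ω}
    (hu : MeasurableSet[m] u) :
    μ (t ∩ u) = μ t * μ u := by
  have hinter : ∀ u, MeasurableSet[m] u → μ.real (t ∩ u) = c * μ.real u := by
    intro u hu
    calc μ.real (t ∩ u) = ∫ ω in u, t.indicator (fun _ => (1 : ℝ)) ω ∂μ := by
          rw [integral_indicator_const _ ht, measureReal_restrict_apply ht, smul_eq_mul,
            mul_one, inter_comm]
      _ = ∫ ω in u, (μ⟦t | m⟧) ω ∂μ :=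
          (setIntegral_condExp hm ((integrable_const 1).indicator ht) hu).symm
      _ = ∫ _ in u, c ∂μ := setIntegral_congr_ae (hm u hu) (hc.mono fun _ h _ => h)
      _ = c * μ.real u := by rw [setIntegral_const, smul_eq_mul, mul_comm]
  have hct : c = μ.real t := by simpa using (hinter univ MeasurableSet.univ).symm
  rw [← ENNReal.toReal_eq_toReal_iff' (measure_ne_top _ _) (by finiteness), ENNReal.toReal_mul]
  exact (hinter u hu).trans (by rw [hct]; rfl)

lemma measure_inter_inter_eq_mul_of_cond [IsFiniteMeasure μ] (hs : MeasurableSet s)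
    (hμs : μ s ≠ 0) (hsm : ∀ u, MeasurableSet[m] u → μ (s ∩ u) = μ s * μ u)
    (htm : ∀ u, MeasurableSet[m] u → μ[|s] (t ∩ u) = μ[|s] t * μ[|s] u)
    {u : Set Ω} (hu : MeasurableSet[m] u) :
    μ (s ∩ t ∩ u) = μ (s ∩ t) * μ u := by
  have hcond : μ[|s] u = μ u := by
    rw [cond_apply hs, hsm u hu, ← mul_assoc, ENNReal.inv_mul_cancel hμs (measure_ne_top _ _),
      one_mul]
  rw [inter_assoc, ← cond_mul_eq_inter hs (t ∩ u), ← cond_mul_eq_inter hs t, htm u hu, hcond]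
  ring

lemma ProbabilityTheory.CondIndepFun.indep_generateFrom_preimage [StandardBorelSpace Ω]
    [IsProbabilityMeasure μ] {hm : m ≤ mΩ} {mβ : MeasurableSpace β} {mγ : MeasurableSpace γ}
    {X : Ω → β} {Z : Ω → γ} (hXZ : CondIndepFun m hm X Z μ) (hX : Measurable X)
    (hZ : Measurable Z) {t : Set γ} (ht : MeasurableSet t)
    (hZt : Indep (generateFrom {Z ⁻¹' t}) m μ) :
    Indep (generateFrom {Z ⁻¹' t}) (mβ.comap X) μ := by
  refine indep_generateFrom_singleton_of_measure_inter hX.comap_le (hZ ht) ?_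
  rintro _ ⟨v, hv, rfl⟩
  have hconst : μ⟦Z ⁻¹' t | m⟧ =ᵐ[μ] fun _ => μ.real (Z ⁻¹' t) := by
    simpa [integral_indicator_const _ (hZ ht)] using
      condExp_indep_eq (generateFrom_le (by simpa using hZ ht)) hm
        ((stronglyMeasurable_const (b := (1 : ℝ))).indicator
          (measurableSet_generateFrom (mem_singleton _))) hZt
  have hprod := (condIndepFun_iff_condExp_inter_preimage_eq_mul hX hZ).1 hXZ v t hv ht
  have hreal : μ.real (X ⁻¹' v ∩ Z ⁻¹' t) = μ.real (X ⁻¹' v) * μ.real (Z ⁻¹' t) := by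
    calc μ.real (X ⁻¹' v ∩ Z ⁻¹' t) = ∫ ω, (μ⟦X ⁻¹' v ∩ Z ⁻¹' t | m⟧) ω ∂μ := by
          rw [integral_condExp hm, integral_indicator_const _ ((hX hv).inter (hZ ht)),
            smul_eq_mul, mul_one]
      _ = ∫ ω, (μ⟦X ⁻¹' v | m⟧) ω * μ.real (Z ⁻¹' t) ∂μ :=
          integral_congr_ae (hprod.trans (Filter.EventuallyEq.rfl.mul hconst))
      _ = μ.real (X ⁻¹' v) * μ.real (Z ⁻¹' t) := by
          rw [integral_mul_const, integral_condExp hm, integral_indicator_const _ (hX hv),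
            smul_eq_mul, mul_one]
  rw [inter_comm, mul_comm, ← ENNReal.toReal_eq_toReal_iff' (measure_ne_top _ _)
    (by finiteness), ENNReal.toReal_mul]
  exact hreal

lemma integral_cond_ind_mul_of_indep {f : Ω → ℝ}
    (hs : MeasurableSet s) (ht : MeasurableSet t) (hf : AEStronglyMeasurable f μ)
    (h : Indep (generateFrom {s ∩ t}) (MeasurableSpace.comap f inferInstance) μ) :
    ∫ ω, ind t ω * f ω ∂μ[|s] = μ[|s].real t * ∫ ω, f ω ∂μ := by
  have hindep : IndepFun (ind (s ∩ t)) f μ :=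
    h.indicator_indepFun 1 (measurableSet_generateFrom (mem_singleton _))
  have hst : s.indicator (t.indicator f) = ind (s ∩ t) * f := by
    ext ω
    rw [Pi.mul_apply, ind_mul_apply, indicator_indicator]
  calc ∫ ω, ind t ω * f ω ∂μ[|s] = (μ s)⁻¹.toReal * ∫ ω in s, t.indicator f ω ∂μ := by
        simp only [ind_mul_apply, ProbabilityTheory.cond, integral_smul_measure, smul_eq_mul]
    _ = (μ s)⁻¹.toReal * (μ.real (s ∩ t) * ∫ ω, f ω ∂μ) := by
        rw [← integral_indicator hs, hst, hindep.integral_mul_eq_mul_integral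
          (measurable_const.indicator (hs.inter ht)).aestronglyMeasurable hf]
        simp [ind, hs.inter ht]
    _ = μ[|s].real t * ∫ ω, f ω ∂μ := by
        simp only [Measure.real, cond_apply hs, ENNReal.toReal_mul, mul_assoc]

lemma integral_cond_ind_mul_of_condIndepFun [StandardBorelSpace Ω] [IsProbabilityMeasure μ]
    {hm : m ≤ mΩ} {mα : MeasurableSpace α} {mδ : MeasurableSpace δ}
    [MeasurableSingletonClass α] [MeasurableSingletonClass δ]
    {S : Ω → α} {G : Ω → δ} {X : Ω → ℝ} {x : α} {y : δ} {c : ℝ}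
    (hS : Measurable S) (hG : Measurable G) (hX : Measurable X)
    (hSm : Indep (mα.comap S) m μ) (hSx : μ (S ⁻¹' {x}) ≠ 0)
    (hGm : (μ[|S ⁻¹' {x}])⟦G ⁻¹' {y} | m⟧ =ᵐ[μ[|S ⁻¹' {x}]] fun _ => c)
    (hXSG : CondIndepFun m hm X (fun ω => (S ω, G ω)) μ) :
    ∫ ω, ind (G ⁻¹' {y}) ω * X ω ∂μ[|S ⁻¹' {x}]
      = μ[|S ⁻¹' {x}].real (G ⁻¹' {y}) * ∫ ω, X ω ∂μ := by
  have hs := hS (measurableSet_singleton x)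
  have ht := hG (measurableSet_singleton y)
  have := cond_isProbabilityMeasure (μ := μ) hSx
  have hatom : Indep (generateFrom {S ⁻¹' {x} ∩ G ⁻¹' {y}}) m μ :=
    indep_generateFrom_singleton_of_measure_inter hm (hs.inter ht) fun u hu =>
      measure_inter_inter_eq_mul_of_cond hs hSx
        (fun u hu => (hSm.indepSet_of_measurableSet
          ⟨{x}, measurableSet_singleton x, rfl⟩ hu).measure_inter_eq_mul)
        (fun u hu => measure_inter_eq_mul_of_condExp_ae_eq_const hm ht hGm hu) hu
  have hpre : (fun ω => (S ω, G ω)) ⁻¹' {(x, y)} = S ⁻¹' {x} ∩ G ⁻¹' {y} := by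
    ext; simp
  refine integral_cond_ind_mul_of_indep hs ht hX.aestronglyMeasurable ?_
  rw [← hpre] at hatom ⊢
  exact hXSG.indep_generateFrom_preimage hX (hS.prodMk hG) (measurableSet_singleton _) hatom

end

theorem transport_bias_randomized_neighborhood_treatment_general
    {Ω : Type*} [mΩ : MeasurableSpace Ω] [StandardBorelSpace Ω]
    (μ : Measure Ω) [IsProbabilityMeasure μ]
    (gmax : ℕ)
    (S G : Ω → ℕ)
    (hSmeas : Measurable S)
    (hSpos : ∀ s, (s = 1 ∨ s = 2) → 0 < μ {ω | S ω = s})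
    (hGmeas : Measurable G)
    (Ypo : ℕ → ℕ → Ω → ℝ)
    (hYpomeas : ∀ a ≤ 1, ∀ g ≤ gmax, Measurable (Ypo a g))
    (hYposq : ∀ a ≤ 1, ∀ g ≤ gmax, MemLp (Ypo a g) 2 μ)
    (Ya : ℕ → Ω → ℝ)
    (hYa : ∀ a ω, Ya a ω = ∑ g ∈ Finset.range (gmax + 1), ind {ω' | G ω' = g} ω * Ypo a g ω)
    (mH : MeasurableSpace Ω) (hH : mH ≤ mΩ)
    (pg : ℕ → ℕ → Ω → ℝ)
    (hpg : ∀ s g, pg s g = (μ[|{ω | S ω = s}])[ind {ω | G ω = g} | mH])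
    (htrans : ∀ a ≤ 1, ∀ g ≤ gmax,
      CondIndepFun mH hH (Ypo a g) (fun ω => (S ω, G ω)) μ)
    (hSH : Indep (MeasurableSpace.comap S inferInstance) mH μ)
    (hrand : ∀ s, (s = 1 ∨ s = 2) → ∀ g ≤ gmax,
      ∀ᵐ ω ∂μ, pg s g ω = ((μ[|{ω' | S ω' = s}]) {ω' | G ω' = g}).toReal) :
    (∫ ω, (Ya 1 ω - Ya 0 ω) ∂(μ[|{ω | S ω = 1}]))
        - ∫ ω, (Ya 1 ω - Ya 0 ω) ∂(μ[|{ω | S ω = 2}])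
      = ∑ g ∈ Finset.range (gmax + 1),
          (∫ ω, (Ypo 1 g ω - Ypo 0 g ω) ∂μ)
            * (((μ[|{ω | S ω = 1}]) {ω | G ω = g}).toReal
                - ((μ[|{ω | S ω = 2}]) {ω | G ω = g}).toReal) := by
  have hterm : ∀ s, (s = 1 ∨ s = 2) → ∀ g ≤ gmax, ∀ a ≤ 1,
      ∫ ω, ind {ω | G ω = g} ω * Ypo a g ω ∂μ[|{ω | S ω = s}]
        = (μ[|{ω | S ω = s}]).real {ω | G ω = g} * ∫ ω, Ypo a g ω ∂μ := fun s hs g hg a ha =>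
    integral_cond_ind_mul_of_condIndepFun hSmeas hGmeas (hYpomeas a ha g hg) hSH (hSpos s hs).ne'
      (hpg s g ▸ (hrand s hs g hg).filter_mono cond_absolutelyContinuous.ae_le)
      (htrans a ha g hg)
  have hstratum : ∀ s, (s = 1 ∨ s = 2) →
      ∫ ω, (Ya 1 ω - Ya 0 ω) ∂μ[|{ω | S ω = s}]
        = ∑ g ∈ Finset.range (gmax + 1), (∫ ω, (Ypo 1 g ω - Ypo 0 g ω) ∂μ)
            * (μ[|{ω | S ω = s}]).real {ω | G ω = g} := by
    intro s hs
    have hint : ∀ a ≤ 1, ∀ g ≤ gmax, Integrable (Ypo a g) μ := fun a ha g hg =>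
      (hYposq a ha g hg).integrable one_le_two
    have hint_cond : ∀ a ≤ 1, ∀ g ≤ gmax,
        Integrable (fun ω => ind {ω | G ω = g} ω * Ypo a g ω) μ[|{ω | S ω = s}] := by
      intro a ha g hg
      simp only [ind_mul_apply]
      exact ((hint a ha g hg).indicator (hGmeas (measurableSet_singleton g))).cond
        (hSpos s hs).ne'
    simp_rw [hYa, ← Finset.sum_sub_distrib]
    refine (integral_finsetSum _ fun g hg => ?_).trans (Finset.sum_congr rfl fun g hg => ?_)
      <;> rw [Finset.mem_range_succ_iff] at hg
    · exact (hint_cond 1 le_rfl g hg).sub (hint_cond 0 zero_le_one g hg)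
    · rw [integral_sub (hint_cond 1 le_rfl g hg) (hint_cond 0 zero_le_one g hg),
        hterm s hs g hg 1 le_rfl, hterm s hs g hg 0 zero_le_one,
        integral_sub (hint 1 le_rfl g hg) (hint 0 zero_le_one g hg)]
      ring
  rw [hstratum 1 (Or.inl rfl), hstratum 2 (Or.inr rfl), ← Finset.sum_sub_distrib]
  exact Finset.sum_congr rfl fun g _ => by simp only [Measure.real]; ring

/-- **Corollary to Theorem 2, second part.**  If the neighborhood treatment is randomized in
both populations, i.e. `P(G=g|S=s,𝓗) = P(G=g|S=s)` a.s. for `s ∈ {1,2}` and all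
`g ∈ {0,…,g_max}`, then `φ₁ − φ₂ = Σ_g E[τ(g)]·(P(G=g|S=1) − P(G=g|S=2))`. -/
theorem transport_bias_randomized_neighborhood_treatment
    {Ω : Type*} [mΩ : MeasurableSpace Ω] [StandardBorelSpace Ω] [Nonempty Ω]
    (μ : Measure Ω) [IsProbabilityMeasure μ]
    (gmax : ℕ)
    (S A G : Ω → ℕ)
    (hS : ∀ ω, S ω = 1 ∨ S ω = 2) (hSmeas : Measurable S)
    (hSpos : ∀ s, (s = 1 ∨ s = 2) → 0 < μ {ω | S ω = s})
    (hA : ∀ ω, A ω ≤ 1) (hG : ∀ ω, G ω ≤ gmax)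
    (hAmeas : Measurable A) (hGmeas : Measurable G)
    (Ypo : ℕ → ℕ → Ω → ℝ)
    (hYpomeas : ∀ a ≤ 1, ∀ g ≤ gmax, Measurable (Ypo a g))
    (hYposq : ∀ a ≤ 1, ∀ g ≤ gmax, MemLp (Ypo a g) 2 μ)
    (Ya : ℕ → Ω → ℝ)
    (hYa : ∀ a ω, Ya a ω = ∑ g ∈ Finset.range (gmax + 1), ind {ω' | G ω' = g} ω * Ypo a g ω)
    (Y : Ω → ℝ)
    (hY : ∀ ω, Y ω = ind {ω' | A ω' = 1} ω * Ya 1 ω + ind {ω' | A ω' = 0} ω * Ya 0 ω)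
    (mH : MeasurableSpace Ω) (hH : mH ≤ mΩ)
    (pg : ℕ → ℕ → Ω → ℝ)
    (hpg : ∀ s g, pg s g = (μ[|{ω | S ω = s}])[ind {ω | G ω = g} | mH])
    (hpgbdd : ∀ s g, ∀ᵐ ω ∂μ, 0 ≤ pg s g ω ∧ pg s g ω ≤ 1)
    (hpgmeas : ∀ s g, Measurable[mH] (pg s g))
    (htrans : ∀ a ≤ 1, ∀ g ≤ gmax,
      CondIndepFun mH hH (Ypo a g) (fun ω => (S ω, G ω)) μ)
    (hSH : Indep (MeasurableSpace.comap S inferInstance) mH μ)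
    (hrand : ∀ s, (s = 1 ∨ s = 2) → ∀ g ≤ gmax,
      ∀ᵐ ω ∂μ, pg s g ω = ((μ[|{ω' | S ω' = s}]) {ω' | G ω' = g}).toReal) :
    (∫ ω, (Ya 1 ω - Ya 0 ω) ∂(μ[|{ω | S ω = 1}]))
        - ∫ ω, (Ya 1 ω - Ya 0 ω) ∂(μ[|{ω | S ω = 2}])
      = ∑ g ∈ Finset.range (gmax + 1),
          (∫ ω, (Ypo 1 g ω - Ypo 0 g ω) ∂μ)
            * (((μ[|{ω | S ω = 1}]) {ω | G ω = g}).toReal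
                - ((μ[|{ω | S ω = 2}]) {ω | G ω = g}).toReal) :=
  transport_bias_randomized_neighborhood_treatment_general (mΩ := mΩ) μ gmax S G hSmeas hSpos hGmeas
    Ypo hYpomeas hYposq Ya hYa mH hH pg hpg htrans hSH hrand
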